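/- Let Q : L²(μ) → L²(μ) be a linear operator with ‖Qu‖₂ ≤ ‖u‖₂ for all u ∈ L²(μ), let γ ≥ 1 and c > 0 be reals, and assume that for every function w : 𝒯 → (0,∞) satisfying w(T) ≤ γ^{δ(T,T')}·w(T') for all T, T' ∈ 𝒯, the weighted estimate ‖ρ_w·Qu‖₂ ≤ c·‖ρ_w·u‖₂ holds for all u ∈ L²(μ), where ρ_w := ∑_{T∈𝒯} w(T)·1_{\{T\}}. Then for all nonempty L, L' ⊆ 𝒯 and all u ∈ L²(μ): ‖1_L · Q(1_{L'} · u)‖₂ ≤ min{c·γ^{−δ(L,L')}, 1}·‖1_{L'} · u‖₂. -/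

import Mathlib

open MeasureTheory

/-- Multiplication of an `L²` function by the indicator function of a measurable set. -/
noncomputable def indMul {Ω : Type*} [MeasurableSpace Ω] {μ : Measure Ω}
    (s : Set Ω) (hs : MeasurableSet s) (u : Lp ℝ 2 μ) : Lp ℝ 2 μ :=
  ((Lp.memLp u).indicator hs).toLp (s.indicator u)

/-- The distance `δ(L, L') = min {δ(T,T') : T ∈ L, T' ∈ L'}` between two collections. -/
noncomputable def setDist {𝒯 : Type*} (δ : 𝒯 → 𝒯 → ℕ) (L L' : Set 𝒯) : ℕ :=
  sInf {n | ∃ T ∈ L, ∃ T' ∈ L', δ T T' = n}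

/-- The union `⋃ T ∈ L, A T` of measurable sets over a collection is measurable. -/
theorem unionMeasurable {Ω 𝒯 : Type*} [MeasurableSpace Ω] [Countable 𝒯] {A : 𝒯 → Set Ω}
    (hA : ∀ T, MeasurableSet (A T)) (L : Set 𝒯) : MeasurableSet (⋃ T ∈ L, A T) :=
  MeasurableSet.biUnion (Set.to_countable L) fun T _ => hA T

/-!
Take the weight `w(T) := γ^{δ({T}, L')}`. The triangle inequality for `δ` makes it admissible,
it equals `1` on `L'` and is at least `γ^{δ(L, L')}` on `L`. The weighted estimate for `w`
therefore gives `γ^{δ(L,L')} ‖1_L Q(1_{L'} u)‖₂ ≤ c ‖1_{L'} u‖₂`, while the bound by `1` is the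
contractivity of `Q` together with `‖1_L f‖₂ ≤ ‖f‖₂`.
-/

section IndicatorMultiplication

variable {Ω : Type*} [MeasurableSpace Ω] {μ : Measure Ω} {s : Set Ω}

theorem coeFn_indMul (hs : MeasurableSet s) (u : Lp ℝ 2 μ) :
    indMul s hs u =ᵐ[μ] s.indicator u :=
  MemLp.coeFn_toLp _

theorem norm_indMul (hs : MeasurableSet s) (u : Lp ℝ 2 μ) :
    ‖indMul s hs u‖ = (eLpNorm (s.indicator u) 2 μ).toReal :=
  Lp.norm_toLp _ _

theorem norm_indMul_le (hs : MeasurableSet s) (u : Lp ℝ 2 μ) : ‖indMul s hs u‖ ≤ ‖u‖ := by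
  rw [norm_indMul, Lp.norm_def]
  exact ENNReal.toReal_mono (Lp.eLpNorm_ne_top u) (eLpNorm_indicator_le _)

theorem ofReal_mul_eLpNorm_indicator_le {p : ENNReal} {ρ f : Ω → ℝ} {a : ℝ} (ha : 0 ≤ a)
    (hρ : ∀ x ∈ s, a ≤ |ρ x|) :
    ENNReal.ofReal a * eLpNorm (s.indicator f) p μ ≤ eLpNorm (fun x => ρ x * f x) p μ := by
  rw [← Real.enorm_of_nonneg ha, ← eLpNorm_const_smul]
  refine eLpNorm_mono fun x => ?_
  by_cases hx : x ∈ s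
  · rw [Pi.smul_apply, Set.indicator_of_mem hx, smul_eq_mul, norm_mul, norm_mul,
      Real.norm_of_nonneg ha]
    exact mul_le_mul_of_nonneg_right (hρ x hx) (norm_nonneg _)
  · simp only [Pi.smul_apply, Set.indicator_of_notMem hx, smul_zero, norm_zero]
    exact norm_nonneg _

theorem eLpNorm_mul_indMul {ρ : Ω → ℝ} (hs : MeasurableSet s) (hρ : ∀ x ∈ s, ρ x = 1)
    (u : Lp ℝ 2 μ) :
    eLpNorm (fun x => ρ x * indMul s hs u x) 2 μ = eLpNorm (s.indicator u) 2 μ := by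
  refine eLpNorm_congr_ae ?_
  filter_upwards [coeFn_indMul hs u] with x hx
  by_cases hxs : x ∈ s
  · rw [hx, hρ x hxs, one_mul]
  · simp [hx, Set.indicator_of_notMem hxs]

theorem norm_indMul_le_of_eLpNorm_mul_le {t : Set Ω} (hs : MeasurableSet s)
    (ht : MeasurableSet t) {ρ : Ω → ℝ} {a c : ℝ} (ha : 0 < a) (hc : 0 ≤ c)
    (hρs : ∀ x ∈ s, a ≤ |ρ x|) (hρt : ∀ x ∈ t, ρ x = 1) (f g : Lp ℝ 2 μ)
    (hweighted : eLpNorm (fun x => ρ x * f x) 2 μ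
      ≤ ENNReal.ofReal c * eLpNorm (fun x => ρ x * indMul t ht g x) 2 μ) :
    ‖indMul s hs f‖ ≤ c * a⁻¹ * ‖indMul t ht g‖ := by
  have hg_fin : eLpNorm (t.indicator g) 2 μ ≠ ⊤ :=
    ne_top_of_le_ne_top (Lp.eLpNorm_ne_top g) (eLpNorm_indicator_le _)
  have hbound : ENNReal.ofReal a * eLpNorm (s.indicator f) 2 μ
      ≤ ENNReal.ofReal c * eLpNorm (t.indicator g) 2 μ := by
    rw [← eLpNorm_mul_indMul ht hρt]
    exact (ofReal_mul_eLpNorm_indicator_le ha.le hρs).trans hweighted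
  have hreal := ENNReal.toReal_mono (ENNReal.mul_ne_top ENNReal.ofReal_ne_top hg_fin) hbound
  rw [ENNReal.toReal_mul, ENNReal.toReal_mul, ENNReal.toReal_ofReal ha.le,
    ENNReal.toReal_ofReal hc, ← norm_indMul hs, ← norm_indMul ht] at hreal
  rw [mul_right_comm, le_mul_inv_iff₀ ha, mul_comm]
  exact hreal

end IndicatorMultiplication

section SetDist

variable {𝒯 : Type*} {δ : 𝒯 → 𝒯 → ℕ} {L L' : Set 𝒯}

theorem setDist_le {T T' : 𝒯} (hT : T ∈ L) (hT' : T' ∈ L') : setDist δ L L' ≤ δ T T' :=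
  Nat.sInf_le ⟨T, hT, T', hT', rfl⟩

theorem exists_mem_mem_setDist_eq (hL : L.Nonempty) (hL' : L'.Nonempty) :
    ∃ T ∈ L, ∃ T' ∈ L', δ T T' = setDist δ L L' :=
  let ⟨T, hT⟩ := hL
  let ⟨T', hT'⟩ := hL'
  Nat.sInf_mem (s := {n | ∃ T ∈ L, ∃ T' ∈ L', δ T T' = n})
    ⟨δ T T', T, hT, T', hT', rfl⟩

theorem exists_setDist_singleton_eq (hL' : L'.Nonempty) (T : 𝒯) :
    ∃ T' ∈ L', δ T T' = setDist δ {T} L' := by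
  obtain ⟨_, rfl, T', hT', h⟩ := exists_mem_mem_setDist_eq (Set.singleton_nonempty T) hL'
  exact ⟨T', hT', h⟩

theorem setDist_le_setDist_singleton (hL' : L'.Nonempty) {T : 𝒯} (hT : T ∈ L) :
    setDist δ L L' ≤ setDist δ {T} L' := by
  obtain ⟨T', hT', h⟩ := exists_setDist_singleton_eq (δ := δ) hL' T
  exact h ▸ setDist_le hT hT'

theorem setDist_singleton_le_add (hδtri : ∀ T T' T'', δ T T'' ≤ δ T T' + δ T' T'')
    (hL' : L'.Nonempty) (T T' : 𝒯) :
    setDist δ {T} L' ≤ δ T T' + setDist δ {T'} L' := by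
  obtain ⟨T'', hT'', h⟩ := exists_setDist_singleton_eq (δ := δ) hL' T'
  exact h ▸ (setDist_le (Set.mem_singleton T) hT'').trans (hδtri T T' T'')

theorem setDist_singleton_of_mem (hδ0 : ∀ T, δ T T = 0) {T : 𝒯} (hT : T ∈ L') :
    setDist δ {T} L' = 0 :=
  Nat.le_zero.mp (hδ0 T ▸ setDist_le (Set.mem_singleton T) hT)

end SetDist

theorem sum_mul_indicator_one_of_mem {Ω 𝒯 : Type*} [Fintype 𝒯] {A : 𝒯 → Set Ω}
    (hdisj : Pairwise (Function.onFun Disjoint A)) (w : 𝒯 → ℝ) {T₀ : 𝒯} {x : Ω}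
    (hx : x ∈ A T₀) :
    ∑ T, w T * (A T).indicator (fun _ => (1 : ℝ)) x = w T₀ := by
  rw [Finset.sum_eq_single T₀ (fun T _ hT => ?_) (by simp)]
  · simp [Set.indicator_of_mem hx]
  · simp [Set.indicator_of_notMem fun h => (hdisj hT).le_bot ⟨h, hx⟩]

theorem stmt_3_general {Ω : Type*} [MeasurableSpace Ω] (μ : Measure Ω)
    {𝒯 : Type*} [Fintype 𝒯]
    (A : 𝒯 → Set Ω) (hAmeas : ∀ T, MeasurableSet (A T))
    (hdisj : Pairwise (Function.onFun Disjoint A))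
    (δ : 𝒯 → 𝒯 → ℕ)
    (hδ0 : ∀ T T', δ T T' = 0 ↔ T = T')
    (hδtri : ∀ T T' T'', δ T T'' ≤ δ T T' + δ T' T'')
    (Q : Lp ℝ 2 μ →ₗ[ℝ] Lp ℝ 2 μ)
    (hQ : ∀ u : Lp ℝ 2 μ, ‖Q u‖ ≤ ‖u‖)
    (γ : ℝ) (hγ : 1 ≤ γ) (c : ℝ) (hc : 0 < c)
    (hweighted : ∀ w : 𝒯 → ℝ, (∀ T, 0 < w T) →
      (∀ T T', w T ≤ γ ^ δ T T' * w T') →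
      ∀ u : Lp ℝ 2 μ,
        eLpNorm (fun x => (∑ T, w T * (A T).indicator (fun _ => (1 : ℝ)) x)
          * (Q u : Ω → ℝ) x) 2 μ
        ≤ ENNReal.ofReal c
          * eLpNorm (fun x => (∑ T, w T * (A T).indicator (fun _ => (1 : ℝ)) x)
              * (u : Ω → ℝ) x) 2 μ)
    (L L' : Set 𝒯) (hL' : L'.Nonempty)
    (u : Lp ℝ 2 μ) :
    ‖indMul (⋃ T ∈ L, A T) (unionMeasurable hAmeas L)
        (Q (indMul (⋃ T ∈ L', A T) (unionMeasurable hAmeas L') u))‖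
      ≤ min (c * (γ ^ setDist δ L L')⁻¹) 1
        * ‖indMul (⋃ T ∈ L', A T) (unionMeasurable hAmeas L') u‖ := by
  have hγ0 : 0 < γ := one_pos.trans_le hγ
  set w : 𝒯 → ℝ := fun T => γ ^ setDist δ {T} L'
  have hw_pos : ∀ T, 0 < w T := fun T => pow_pos hγ0 _
  have hw_graded : ∀ T T', w T ≤ γ ^ δ T T' * w T' := fun T T' => by
    rw [← pow_add]
    exact pow_le_pow_right₀ hγ (setDist_singleton_le_add hδtri hL' T T')
  have hw_L : ∀ x ∈ ⋃ T ∈ L, A T,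
      γ ^ setDist δ L L' ≤ |∑ T, w T * (A T).indicator (fun _ => (1 : ℝ)) x| := by
    intro x hx
    obtain ⟨T, hT, hxT⟩ := Set.mem_iUnion₂.mp hx
    rw [sum_mul_indicator_one_of_mem hdisj w hxT, abs_of_pos (hw_pos T)]
    exact pow_le_pow_right₀ hγ (setDist_le_setDist_singleton hL' hT)
  have hw_L' : ∀ x ∈ ⋃ T ∈ L', A T, ∑ T, w T * (A T).indicator (fun _ => (1 : ℝ)) x = 1 := by
    intro x hx
    obtain ⟨T, hT, hxT⟩ := Set.mem_iUnion₂.mp hx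
    rw [sum_mul_indicator_one_of_mem hdisj w hxT]
    simp [w, setDist_singleton_of_mem (fun T => (hδ0 T T).mpr rfl) hT]
  rw [min_mul_of_nonneg _ _ (norm_nonneg _), le_min_iff, one_mul]
  exact ⟨norm_indMul_le_of_eLpNorm_mul_le _ _ (pow_pos hγ0 _) hc.le hw_L hw_L' _ u
      (hweighted w hw_pos hw_graded _),
    (norm_indMul_le _ _).trans (hQ _)⟩

/-- Weighted `L²`-estimates imply decay estimates.  Let `Q` be a linear
operator on `L²(μ)` with `‖Qu‖₂ ≤ ‖u‖₂` which is stable with constant `c` in the weighted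
`L²`-norm for every piecewise constant weight `ρ_w = ∑_T w(T) 1_{A_T}` with grading `γ`, i.e.
`w(T) ≤ γ^{δ(T,T')} w(T')`.  Then for all nonempty collections `L, L'` and all `u`:
`‖1_L Q(1_{L'} u)‖₂ ≤ min{c γ^{−δ(L,L')}, 1} ‖1_{L'} u‖₂`. -/
theorem stmt_3 {Ω : Type*} [MeasurableSpace Ω] (μ : Measure Ω)
    {𝒯 : Type*} [Fintype 𝒯] [Nonempty 𝒯]
    (A : 𝒯 → Set Ω) (hAmeas : ∀ T, MeasurableSet (A T))
    (hdisj : Pairwise (Function.onFun Disjoint A))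
    (hApos : ∀ T, 0 < μ (A T))
    (hcover : μ (Set.univ \ ⋃ T, A T) = 0)
    (δ : 𝒯 → 𝒯 → ℕ)
    (hδ0 : ∀ T T', δ T T' = 0 ↔ T = T')
    (hδsymm : ∀ T T', δ T T' = δ T' T)
    (hδtri : ∀ T T' T'', δ T T'' ≤ δ T T' + δ T' T'')
    (Q : Lp ℝ 2 μ →ₗ[ℝ] Lp ℝ 2 μ)
    (hQ : ∀ u : Lp ℝ 2 μ, ‖Q u‖ ≤ ‖u‖)
    (γ : ℝ) (hγ : 1 ≤ γ) (c : ℝ) (hc : 0 < c)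
    (hweighted : ∀ w : 𝒯 → ℝ, (∀ T, 0 < w T) →
      (∀ T T', w T ≤ γ ^ δ T T' * w T') →
      ∀ u : Lp ℝ 2 μ,
        eLpNorm (fun x => (∑ T, w T * (A T).indicator (fun _ => (1 : ℝ)) x)
          * (Q u : Ω → ℝ) x) 2 μ
        ≤ ENNReal.ofReal c
          * eLpNorm (fun x => (∑ T, w T * (A T).indicator (fun _ => (1 : ℝ)) x)
              * (u : Ω → ℝ) x) 2 μ)
    (L L' : Set 𝒯) (hL : L.Nonempty) (hL' : L'.Nonempty)
    (u : Lp ℝ 2 μ) :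
    ‖indMul (⋃ T ∈ L, A T) (unionMeasurable hAmeas L)
        (Q (indMul (⋃ T ∈ L', A T) (unionMeasurable hAmeas L') u))‖
      ≤ min (c * (γ ^ setDist δ L L')⁻¹) 1
        * ‖indMul (⋃ T ∈ L', A T) (unionMeasurable hAmeas L') u‖ :=
  stmt_3_general μ A hAmeas hdisj δ hδ0 hδtri Q hQ γ hγ c hc hweighted L L' hL' u
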